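/- Let C ≥ 2, let ℓ : Δ^{C−1} → ℝ^C be a proper loss with ℓ_{−C} the vector of the first C−1 partial losses and ℓ_C the last partial loss, and let L̲̃(p̃) = L(Π^{-1}(p̃), Π^{-1}(p̃)) be the projected conditional Bayes risk. Suppose L̲̃ is differentiable on the interior of Δ̃^{C−1} and let ψ̃ = −∇L̲̃ be the canonical link. Then for every p̃ in the interior of Δ̃^{C−1}: (a) (ℓ_C ∘ Π^{-1})(p̃) = (−L̲̃)^*(ψ̃(p̃)), and (b) (ℓ_{−C} ∘ Π^{-1})(p̃) = ((−L̲̃)^*(ψ̃(p̃))) · 1_{C−1} − ψ̃(p̃), where (−L̲̃)^*(x) = ⟨p̃, x⟩ + L̲̃(p̃) for x = ψ̃(p̃) is the Legendre–Fenchel conjugate of −L̲̃ evaluated at ψ̃(p̃), i.e., (−L̲̃)^*(ψ̃(p̃)) = ⟨p̃, ψ̃(p̃)⟩ + L̲̃(p̃). -/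

import Mathlib

/-! Properness says that, for fixed `q = Π⁻¹ p̃`, the map `x ↦ L(Π⁻¹ x, q)`, which is affine in `x`,
lies above `L̲̃` and touches it at `p̃`. At an interior point where `L̲̃` is differentiable the two
therefore have the same gradient, which reads `∇L̲̃(p̃) = ℓ_{-C}(q) - ℓ_C(q) · 1`. Substituting this into
`L̲̃(p̃) = ⟨p̃, ℓ_{-C}(q)⟩ + (1 - ⟨p̃, 1⟩) ℓ_C(q)` gives both identities. -/

noncomputable section

/-- The probability simplex `Δ^C ⊆ ℝ^{d+1}` (here `C = d+1`). -/
def simplex (n : ℕ) : Set (Fin n → ℝ) :=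
  {p | (∀ i, 0 ≤ p i) ∧ ∑ i, p i = 1}

/-- The interior of the projected probability simplex `Δ̃^{C-1} ⊆ ℝ^{C-1}` (here `C-1 = d`). -/
def projInterior (d : ℕ) : Set (Fin d → ℝ) :=
  {p | (∀ i, 0 < p i) ∧ ∑ i, p i < 1}

/-- The inverse projection `Π⁻¹ : Δ̃^{C-1} → Δ^{C-1}`,
`p̃ ↦ (p̃₁, …, p̃_{C-1}, 1 - ∑ i, p̃ i)`. -/
def piInv (d : ℕ) (p : Fin d → ℝ) : Fin (d + 1) → ℝ :=
  Fin.snoc p (1 - ∑ i, p i)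

/-- The conditional risk `L(p,q) = ∑ i, p i * ℓ_i(q)` of a loss `ℓ`. -/
def condRisk {n : ℕ} (ℓ : (Fin n → ℝ) → (Fin n → ℝ)) (p q : Fin n → ℝ) : ℝ :=
  ∑ i, p i * ℓ q i

/-- A loss is proper if `L(p,p) ≤ L(p,q)` on the simplex. -/
def Proper {n : ℕ} (ℓ : (Fin n → ℝ) → (Fin n → ℝ)) : Prop :=
  ∀ p ∈ simplex n, ∀ q ∈ simplex n, condRisk ℓ p p ≤ condRisk ℓ p q

/-- The composition `ℓ ∘ Π⁻¹ : ℝ^{C-1} → ℝ^C`. -/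
def lossComp (d : ℕ) (ℓ : (Fin (d + 1) → ℝ) → (Fin (d + 1) → ℝ)) :
    (Fin d → ℝ) → (Fin (d + 1) → ℝ) :=
  fun x => ℓ (piInv d x)

/-- The projected conditional Bayes risk `L̲̃(p̃) = L(Π⁻¹ p̃, Π⁻¹ p̃)`. -/
def projBayes (d : ℕ) (ℓ : (Fin (d + 1) → ℝ) → (Fin (d + 1) → ℝ)) :
    (Fin d → ℝ) → ℝ :=
  fun x => condRisk ℓ (piInv d x) (piInv d x)

/-- The gradient `∇L̲̃` of the projected conditional Bayes risk. -/
def gradPB (d : ℕ) (ℓ : (Fin (d + 1) → ℝ) → (Fin (d + 1) → ℝ)) :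
    (Fin d → ℝ) → (Fin d → ℝ) :=
  fun x i => fderiv ℝ (projBayes d ℓ) x (Pi.single i 1)

/-- The Hessian `H_{L̲̃}(x) i j = ∂_j ∂_i L̲̃ (x)` of the projected conditional Bayes risk. -/
def hessPB (d : ℕ) (ℓ : (Fin (d + 1) → ℝ) → (Fin (d + 1) → ℝ))
    (x : Fin d → ℝ) (i j : Fin d) : ℝ :=
  fderiv ℝ (gradPB d ℓ) x (Pi.single j 1) i

/-- The canonical link `ψ̃ = -∇L̲̃`. -/
def canLink (d : ℕ) (ℓ : (Fin (d + 1) → ℝ) → (Fin (d + 1) → ℝ)) :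
    (Fin d → ℝ) → (Fin d → ℝ) :=
  fun x i => -(gradPB d ℓ x i)

end

open Filter Topology

theorem HasFDerivAt.eq_of_eventuallyLE_of_eq {E : Type*} [NormedAddCommGroup E] [NormedSpace ℝ E]
    {f g : E → ℝ} {f' g' : E →L[ℝ] ℝ} {x : E} (hf : HasFDerivAt f f' x) (hg : HasFDerivAt g g' x)
    (hle : f ≤ᶠ[𝓝 x] g) (heq : f x = g x) : f' = g' := by
  have hmin : IsLocalMin (fun y => g y - f y) x := by
    filter_upwards [hle] with y hy
    linarith
  exact (sub_eq_zero.mp (hmin.hasFDerivAt_eq_zero (hg.sub hf))).symm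

theorem isOpen_projInterior (d : ℕ) : IsOpen (projInterior d) := by
  have hpos : IsOpen {p : Fin d → ℝ | ∀ i, 0 < p i} := by
    simp only [Set.ofPred_forall]
    exact isOpen_iInter_of_finite fun i => isOpen_lt continuous_const (continuous_apply i)
  exact hpos.inter (isOpen_lt (continuous_finsetSum _ fun i _ => continuous_apply i) continuous_const)

theorem piInv_mem_simplex {d : ℕ} {x : Fin d → ℝ} (hx : ∀ i, 0 ≤ x i) (hsum : ∑ i, x i ≤ 1) :
    piInv d x ∈ simplex (d + 1) := by
  refine ⟨fun i => ?_, by simp [piInv, Fin.sum_univ_castSucc]⟩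
  cases i using Fin.lastCases with
  | last => simpa [piInv] using hsum
  | cast j => simpa [piInv] using hx j

theorem piInv_mem_simplex_of_mem_projInterior {d : ℕ} {x : Fin d → ℝ} (hx : x ∈ projInterior d) :
    piInv d x ∈ simplex (d + 1) :=
  piInv_mem_simplex (fun i => (hx.1 i).le) hx.2.le

theorem condRisk_piInv_left {d : ℕ} (ℓ : (Fin (d + 1) → ℝ) → (Fin (d + 1) → ℝ))
    (x : Fin d → ℝ) (q : Fin (d + 1) → ℝ) :
    condRisk ℓ (piInv d x) q = ∑ i, x i * (ℓ q i.castSucc - ℓ q (Fin.last d)) + ℓ q (Fin.last d) := by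
  simp only [condRisk, piInv, Fin.sum_univ_castSucc, Fin.snoc_castSucc, Fin.snoc_last, mul_sub,
    Finset.sum_sub_distrib, ← Finset.sum_mul]
  ring

section ProperLoss

variable {d : ℕ} {ℓ : (Fin (d + 1) → ℝ) → (Fin (d + 1) → ℝ)} {pt : Fin d → ℝ}

theorem gradPB_eq_of_proper (hproper : Proper ℓ) (hpt : pt ∈ projInterior d)
    (hdiff : DifferentiableAt ℝ (projBayes d ℓ) pt) (i : Fin d) :
    gradPB d ℓ pt i = ℓ (piInv d pt) i.castSucc - ℓ (piInv d pt) (Fin.last d) := by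
  set q := piInv d pt
  set c : Fin d → ℝ := fun j => ℓ q j.castSucc - ℓ q (Fin.last d)
  have hbayes_le : projBayes d ℓ ≤ᶠ[𝓝 pt] fun x => condRisk ℓ (piInv d x) q := by
    filter_upwards [(isOpen_projInterior d).mem_nhds hpt] with x hx
    exact hproper _ (piInv_mem_simplex_of_mem_projInterior hx) _
      (piInv_mem_simplex_of_mem_projInterior hpt)
  have haffine : HasFDerivAt (fun x => condRisk ℓ (piInv d x) q)
      (∑ j, c j • (ContinuousLinearMap.proj j : (Fin d → ℝ) →L[ℝ] ℝ)) pt := by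
    simp_rw [condRisk_piInv_left]
    exact (HasFDerivAt.fun_sum fun j _ => (hasFDerivAt_apply j pt).mul_const (c j)).add_const _
  rw [gradPB, hdiff.hasFDerivAt.eq_of_eventuallyLE_of_eq haffine hbayes_le rfl]
  simp [Pi.single_apply, c]

theorem canLink_eq_of_proper (hproper : Proper ℓ) (hpt : pt ∈ projInterior d)
    (hdiff : DifferentiableAt ℝ (projBayes d ℓ) pt) (i : Fin d) :
    canLink d ℓ pt i = ℓ (piInv d pt) (Fin.last d) - ℓ (piInv d pt) i.castSucc := by
  rw [canLink, gradPB_eq_of_proper hproper hpt hdiff]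
  ring

theorem sum_mul_canLink_add_projBayes_of_proper (hproper : Proper ℓ) (hpt : pt ∈ projInterior d)
    (hdiff : DifferentiableAt ℝ (projBayes d ℓ) pt) :
    (∑ i, pt i * canLink d ℓ pt i) + projBayes d ℓ pt = ℓ (piInv d pt) (Fin.last d) := by
  simp only [canLink_eq_of_proper hproper hpt hdiff, projBayes, condRisk_piInv_left, mul_sub,
    Finset.sum_sub_distrib]
  ring

end ProperLoss

theorem stmt_10_general (d : ℕ)
    (ℓ : (Fin (d + 1) → ℝ) → (Fin (d + 1) → ℝ)) (hproper : Proper ℓ)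
    (hdiff : ∀ pt ∈ projInterior d, DifferentiableAt ℝ (projBayes d ℓ) pt) :
    ∀ pt ∈ projInterior d,
      ℓ (piInv d pt) (Fin.last d)
          = (∑ i, pt i * canLink d ℓ pt i) + projBayes d ℓ pt ∧
      ∀ i : Fin d,
        ℓ (piInv d pt) i.castSucc
          = ((∑ j, pt j * canLink d ℓ pt j) + projBayes d ℓ pt) - canLink d ℓ pt i := by
  intro pt hpt
  have hconj := sum_mul_canLink_add_projBayes_of_proper hproper hpt (hdiff pt hpt)
  refine ⟨hconj.symm, fun i => ?_⟩
  rw [hconj, canLink_eq_of_proper hproper hpt (hdiff pt hpt)]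
  ring

/-- For a proper loss whose projected conditional Bayes risk `L̲̃` is differentiable on the
interior of the projected simplex, with canonical link `ψ̃ = -∇L̲̃`:
(a) `(ℓ_C ∘ Π⁻¹)(pt) = (-L̲̃)^*(ψ̃(pt)) = ⟨pt, ψ̃(pt)⟩ + L̲̃(pt)`, and
(b) `(ℓ₋C ∘ Π⁻¹)(pt) = ((-L̲̃)^*(ψ̃(pt))) · 1_{C-1} - ψ̃(pt)`. -/
theorem stmt_10 (d : ℕ) (hd : 1 ≤ d)
    (ℓ : (Fin (d + 1) → ℝ) → (Fin (d + 1) → ℝ)) (hproper : Proper ℓ)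
    (hdiff : ∀ pt ∈ projInterior d, DifferentiableAt ℝ (projBayes d ℓ) pt) :
    ∀ pt ∈ projInterior d,
      ℓ (piInv d pt) (Fin.last d)
          = (∑ i, pt i * canLink d ℓ pt i) + projBayes d ℓ pt ∧
      ∀ i : Fin d,
        ℓ (piInv d pt) i.castSucc
          = ((∑ j, pt j * canLink d ℓ pt j) + projBayes d ℓ pt) - canLink d ℓ pt i :=
  stmt_10_general d ℓ hproper hdiff
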